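/- Let X be a finite set of distinct points in ℙ¹ × ℙ¹ over a field k such that no point of X has second coordinate [0:1] (so that y₀ is a non-zero-divisor on S/I_X), with π₁(X) = {A₁, …, A_ℓ} and α_k = α_{A_k}. Then for every integer a ≥ |π₁(X)| − 1, there is an equality of ideals ⟨I_X ∩ ⟨x₀,x₁⟩ᵃ, y₀⟩ = ⋂_{k=1}^{ℓ} ⟨y₀, y₁^{α_k}, L_{A_k}⟩ ∩ ⟨⟨x₀,x₁⟩ᵃ, y₀⟩, where L_{A_k} = a_{k,1}x₀ − a_{k,0}x₁ if A_k = [a_{k,0}:a_{k,1}]. -/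

import Mathlib

/-!
Modulo `y₀`, an element of the right-hand side is `∑_d y₁^d f_d` with `f_d ∈ ⟨x₀,x₁⟩ᵃ` divisible
by `L_A` whenever `d < α_A`; we peel off one power of `y₁` at a time. Write
`f_d = (∏_{d < α_A} L_A) g` and let `U` be the remaining first coordinates. Since
`|π₁(X)| ≤ a + 1`, `g` lies in `⟨x₀,x₁⟩^{|U|-1}`, and the forms `∏_{B ∈ U, B ≠ A} L_B` are linearly
independent (evaluate at the points of `U`), hence span all forms of degree `|U| - 1` in `x₀, x₁`.
So `g` is a combination of these products, and each term vanishes at every point of `X` outside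
the fibre over `A`. On that fibre, `∏_{P over A} L_{P₂} ≡ c y₁^{α_A} (mod y₀)` with `c ≠ 0` because
no point has second coordinate `[0:1]`; trading `y₁^{α_A}` for this product makes the term vanish
on all of `X` without changing it modulo `y₀`.

The other inclusion holds because the ideals of the points of a fibre are prime, so
intersecting them multiplies the `y`-forms, and `∏_{P over A} L_{P₂} ∈ ⟨y₀, y₁^{α_A}⟩`.
-/

open MvPolynomial
open scoped Classical

noncomputable section

/-- `ℙ¹` over `k`, as the projectivization of `k²`. A `Finset` of
`P1 k × P1 k` is a finite set of distinct points in `ℙ¹ × ℙ¹`. -/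
abbrev P1 (k : Type) [Field k] := Projectivization k (Fin 2 → k)

variable (k : Type) [Field k]

/-- The linear form `a₁x₀ - a₀x₁` of degree `(1,0)` vanishing at `A = [a₀:a₁]`. -/
def lX (A : P1 k) : MvPolynomial (Fin 4) k :=
  C (A.rep 1) * X 0 - C (A.rep 0) * X 1

/-- The linear form `b₁y₀ - b₀y₁` of degree `(0,1)` vanishing at `B = [b₀:b₁]`. -/
def lY (B : P1 k) : MvPolynomial (Fin 4) k :=
  C (B.rep 1) * X 2 - C (B.rep 0) * X 3

/-- The defining ideal `I_P = ⟨a₁x₀ - a₀x₁, b₁y₀ - b₀y₁⟩` of a point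
`P = [a₀:a₁] × [b₀:b₁]` of `ℙ¹ × ℙ¹`. Here `x₀,x₁,y₀,y₁` are `X 0, X 1, X 2, X 3`. -/
def pointIdeal (P : P1 k × P1 k) : Ideal (MvPolynomial (Fin 4) k) :=
  Ideal.span {lX k P.1, lY k P.2}

/-- The defining ideal `I_X = ⋂_{P ∈ X} I_P` of a finite set of points of `ℙ¹ × ℙ¹`. -/
def IX (Xs : Finset (P1 k × P1 k)) : Ideal (MvPolynomial (Fin 4) k) :=
  ⨅ P ∈ Xs, pointIdeal k P

/-- The irrelevant ideal `B = ⟨x₀y₀, x₀y₁, x₁y₀, x₁y₁⟩`. -/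
def Birr : Ideal (MvPolynomial (Fin 4) k) :=
  Ideal.span {X 0 * X 2, X 0 * X 3, X 1 * X 2, X 1 * X 3}

/-- The ideal `⟨x₀, x₁⟩`. -/
def Mx : Ideal (MvPolynomial (Fin 4) k) := Ideal.span {X 0, X 1}

/-- The bidegree-`(i,j)` component `S_{(i,j)}` of `S = k[x₀,x₁,y₀,y₁]`: the `k`-span of
monomials of degree `i` in `x₀,x₁` and degree `j` in `y₀,y₁`. -/
def bicomp (i j : ℕ) : Submodule k (MvPolynomial (Fin 4) k) :=
  Submodule.span k {f | ∃ m : Fin 4 →₀ ℕ, m 0 + m 1 = i ∧ m 2 + m 3 = j ∧ f = monomial m 1}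

/-- The Hilbert function `H_{S/I}(i,j) = dim_k S_{(i,j)} - dim_k (I ∩ S_{(i,j)})`. -/
def hilb (I : Ideal (MvPolynomial (Fin 4) k)) (i j : ℕ) : ℤ :=
  (Module.finrank k (bicomp k i j) : ℤ) -
    (Module.finrank k
      ((Submodule.restrictScalars k I) ⊓ bicomp k i j : Submodule k (MvPolynomial (Fin 4) k)) : ℤ)

/-- `π₁(X)`, the set of distinct first coordinates of points of `X`. -/
def pi1 (Xs : Finset (P1 k × P1 k)) : Finset (P1 k) := Xs.image Prod.fst

/-- `α_A`, the number of points of `X` whose first coordinate is `A`. -/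
def alphaA (Xs : Finset (P1 k × P1 k)) (A : P1 k) : ℕ :=
  (Xs.filter (fun P => P.1 = A)).card

/-- The point `[0:1]` of `ℙ¹`. -/
def pt01 : P1 k := Projectivization.mk k ![0, 1] (by
  intro h
  have := congrFun h 1
  simp at this)

theorem rep_cross_eq_zero_iff {K : Type*} [Field K] {A B : Projectivization K (Fin 2 → K)} :
    A.rep 1 * B.rep 0 - A.rep 0 * B.rep 1 = 0 ↔ A = B := by
  refine ⟨fun h => ?_, by rintro rfl; ring⟩
  rw [← A.mk_rep, ← B.mk_rep, Projectivization.mk_eq_mk_iff']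
  by_cases hB0 : B.rep 0 = 0
  · have hB1 : B.rep 1 ≠ 0 := fun hB1 =>
      B.rep_nonzero (funext fun i => by fin_cases i <;> simp [hB0, hB1])
    have hA0 : A.rep 0 = 0 := by simpa [hB0, hB1] using h
    refine ⟨A.rep 1 / B.rep 1, funext fun i => ?_⟩
    fin_cases i <;> simp [hA0, hB0, hB1]
  · refine ⟨A.rep 0 / B.rep 0, funext fun i => ?_⟩
    fin_cases i
    · simp [hB0]
    · simp only [Fin.mk_one, Pi.smul_apply, smul_eq_mul]
      field_simp
      linear_combination -h

section LinearChange

variable {R σ : Type*} [CommRing R] {i j l : σ}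

def linearChange (M : Matrix (Fin 2) (Fin 2) R) (i j : σ) :
    MvPolynomial σ R →ₐ[R] MvPolynomial σ R :=
  aeval fun l => if l = i then C (M 0 0) * X i + C (M 0 1) * X j
    else if l = j then C (M 1 0) * X i + C (M 1 1) * X j else X l

theorem linearChange_X_left (M : Matrix (Fin 2) (Fin 2) R) :
    linearChange M i j (X i) = C (M 0 0) * X i + C (M 0 1) * X j := by
  simp [linearChange]

theorem linearChange_X_right (M : Matrix (Fin 2) (Fin 2) R) (hij : i ≠ j) :
    linearChange M i j (X j) = C (M 1 0) * X i + C (M 1 1) * X j := by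
  simp [linearChange, hij.symm]

theorem linearChange_X_of_ne (M : Matrix (Fin 2) (Fin 2) R) (hi : l ≠ i) (hj : l ≠ j) :
    linearChange M i j (X l) = X l := by
  simp [linearChange, hi, hj]

theorem linearChange_comp (M N : Matrix (Fin 2) (Fin 2) R) (hij : i ≠ j) :
    (linearChange M i j).comp (linearChange N i j) = linearChange (N * M) i j := by
  refine algHom_ext fun l => ?_
  by_cases hi : l = i
  · subst hi
    simp only [AlgHom.coe_comp, Function.comp_apply, linearChange_X_left,
      linearChange_X_right _ hij, map_add, map_mul, algHom_C, algebraMap_eq, Matrix.mul_apply,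
      Fin.sum_univ_two]
    ring
  by_cases hj : l = j
  · subst hj
    simp only [AlgHom.coe_comp, Function.comp_apply, linearChange_X_left,
      linearChange_X_right _ hij, map_add, map_mul, algHom_C, algebraMap_eq, Matrix.mul_apply,
      Fin.sum_univ_two]
    ring
  simp [linearChange_X_of_ne _ hi hj]

theorem linearChange_one (hij : i ≠ j) :
    linearChange (1 : Matrix (Fin 2) (Fin 2) R) i j = AlgHom.id R _ := by
  refine algHom_ext fun l => ?_
  by_cases hi : l = i
  · subst hi; simp [linearChange_X_left]
  by_cases hj : l = j
  · subst hj; simp [linearChange_X_right _ hij]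
  simp [linearChange_X_of_ne _ hi hj]

def linearChangeEquiv (M : Matrix.SpecialLinearGroup (Fin 2) R) (hij : i ≠ j) :
    MvPolynomial σ R ≃ₐ[R] MvPolynomial σ R :=
  AlgEquiv.ofAlgHom (linearChange M i j) (linearChange ↑M⁻¹ i j)
    (by rw [linearChange_comp _ _ hij, ← Matrix.SpecialLinearGroup.coe_mul, inv_mul_cancel,
      Matrix.SpecialLinearGroup.coe_one, linearChange_one hij])
    (by rw [linearChange_comp _ _ hij, ← Matrix.SpecialLinearGroup.coe_mul, mul_inv_cancel,
      Matrix.SpecialLinearGroup.coe_one, linearChange_one hij])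

@[simp]
theorem linearChangeEquiv_apply (M : Matrix.SpecialLinearGroup (Fin 2) R) (hij : i ≠ j)
    (f : MvPolynomial σ R) : linearChangeEquiv M hij f = linearChange M i j f :=
  rfl

@[simp]
theorem linearChangeEquiv_symm_apply (M : Matrix.SpecialLinearGroup (Fin 2) R) (hij : i ≠ j)
    (f : MvPolynomial σ R) : (linearChangeEquiv M hij).symm f = linearChange ↑M⁻¹ i j f :=
  rfl

theorem linearChange_mem_span_X_pair (M : Matrix (Fin 2) (Fin 2) R) {f : MvPolynomial σ R}
    (hf : f ∈ Ideal.span {X i, X j}) : linearChange M i j f ∈ Ideal.span {X i, X j} := by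
  have hi : (X i : MvPolynomial σ R) ∈ Ideal.span {X i, X j} := Ideal.subset_span (by simp)
  have hj : (X j : MvPolynomial σ R) ∈ Ideal.span {X i, X j} := Ideal.subset_span (by simp)
  refine Ideal.mem_comap.1 ((Ideal.map_le_iff_le_comap (f := linearChange M i j)).1 ?_ hf)
  rw [Ideal.map_span, Ideal.span_le]
  rintro _ ⟨l, hl, rfl⟩
  rcases hl with rfl | rfl <;> simp only [SetLike.mem_coe, linearChange, aeval_X] <;> split_ifs <;>
    exact add_mem (Ideal.mul_mem_left _ _ hi) (Ideal.mul_mem_left _ _ hj)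

end LinearChange

theorem exists_specialLinearGroup_row {K : Type*} [Field K] {v : Fin 2 → K} (hv : v ≠ 0) :
    ∃ M : Matrix.SpecialLinearGroup (Fin 2) K, M 0 0 = v 1 ∧ M 0 1 = -v 0 := by
  by_cases h0 : v 0 = 0
  · have h1 : v 1 ≠ 0 := fun h1 => hv (funext fun i => by fin_cases i <;> simp [h0, h1])
    exact ⟨⟨!![v 1, -v 0; 0, (v 1)⁻¹], by simp [Matrix.det_fin_two, h1]⟩, rfl, rfl⟩
  · exact ⟨⟨!![v 1, -v 0; (v 0)⁻¹, 0], by simp [Matrix.det_fin_two, h0]⟩, rfl, rfl⟩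

section KillVar

variable {R σ : Type*} [CommRing R] [DecidableEq σ] {n l : σ}

def killVar (n : σ) : MvPolynomial σ R →ₐ[R] MvPolynomial σ R :=
  aeval (Function.update X n 0)

@[simp]
theorem killVar_C (a : R) : killVar n (C a : MvPolynomial σ R) = C a :=
  algHom_C _ a

@[simp]
theorem killVar_X_self : killVar (R := R) n (X n) = 0 := by simp [killVar]

@[simp]
theorem killVar_X_of_ne (h : l ≠ n) : killVar (R := R) n (X l) = X l := by simp [killVar, h]

theorem sub_killVar_mem_span (n : σ) (f : MvPolynomial σ R) :
    f - killVar n f ∈ Ideal.span {X n} := by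
  induction f using MvPolynomial.induction_on with
  | C a => simp
  | add p q hp hq => simpa [add_sub_add_comm] using add_mem hp hq
  | mul_X p m hp =>
    by_cases hm : m = n
    · subst hm
      simpa using Ideal.mul_mem_left _ p (Ideal.mem_span_singleton_self (X m))
    · simpa [hm, ← sub_mul] using Ideal.mul_mem_right (X m) _ hp

theorem isPrime_span_X_pair [IsDomain R] (i j : σ) :
    (Ideal.span {X i, X j} : Ideal (MvPolynomial σ R)).IsPrime := by
  suffices h : Ideal.span {X i, X j} = RingHom.ker ((killVar (R := R) j).comp (killVar i)) by
    rw [h]; exact RingHom.ker_isPrime _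
  apply le_antisymm
  · rw [Ideal.span_le]
    rintro _ (rfl | rfl) <;> by_cases hji : j = i <;> simp [hji]
  · intro f hf
    rw [Ideal.span_insert]
    have hf0 : killVar j (killVar i f) = 0 := hf
    have := add_mem (Ideal.mem_sup_left (T := Ideal.span {X j}) (sub_killVar_mem_span i f))
      (Ideal.mem_sup_right (S := Ideal.span {X i}) (sub_killVar_mem_span j (killVar i f)))
    simpa [hf0] using this

end KillVar

section

variable {k}

local notation "R4" => MvPolynomial (Fin 4) k


theorem rep_zero_ne_zero_of_ne_pt01 {B : P1 k} (h : B ≠ pt01 k) : B.rep 0 ≠ 0 := by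
  intro h0
  obtain ⟨c, hc⟩ := Projectivization.exists_smul_eq_mk_rep k ![(0 : k), 1]
    (fun h => by simpa using congrFun h 1)
  apply h
  rw [← rep_cross_eq_zero_iff, pt01, ← hc]
  simp [h0]

def xChange (A : P1 k) : R4 ≃ₐ[k] R4 :=
  linearChangeEquiv (exists_specialLinearGroup_row A.rep_nonzero).choose
    (by decide : (0 : Fin 4) ≠ 1)

def yChange (B : P1 k) : R4 ≃ₐ[k] R4 :=
  linearChangeEquiv (exists_specialLinearGroup_row B.rep_nonzero).choose
    (by decide : (2 : Fin 4) ≠ 3)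

theorem xChange_X_zero (A : P1 k) : xChange A (X 0) = lX k A := by
  obtain ⟨h0, h1⟩ := (exists_specialLinearGroup_row A.rep_nonzero).choose_spec
  simp only [xChange, linearChangeEquiv_apply, linearChange_X_left, h0, h1, lX, C_neg]
  ring

theorem yChange_X_two (B : P1 k) : yChange B (X 2) = lY k B := by
  obtain ⟨h0, h1⟩ := (exists_specialLinearGroup_row B.rep_nonzero).choose_spec
  simp only [yChange, linearChangeEquiv_apply, linearChange_X_left, h0, h1, lY, C_neg]
  ring

theorem prime_lX (A : P1 k) : Prime (lX k A) := by
  rw [← xChange_X_zero]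
  exact (MulEquiv.prime_iff (xChange A)).2 X_prime

theorem isPrime_pointIdeal (P : P1 k × P1 k) : (pointIdeal k P).IsPrime := by
  have hP : pointIdeal k P =
      Ideal.map ((yChange P.2).trans (xChange P.1)) (Ideal.span {X 0, X 2}) := by
    rw [Ideal.map_span, Set.image_pair, pointIdeal]
    congr 2
    · simp [yChange, linearChange_X_of_ne, xChange_X_zero]
    · simp [yChange_X_two, xChange, lY, linearChange_X_of_ne]
  have := isPrime_span_X_pair (R := k) (0 : Fin 4) 2
  rw [hP]
  exact Ideal.map_isPrime_of_equiv _

theorem eval_lX (p : Fin 4 → k) (A : P1 k) : eval p (lX k A) = A.rep 1 * p 0 - A.rep 0 * p 1 := by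
  simp [lX]

theorem eval_lY (p : Fin 4 → k) (B : P1 k) : eval p (lY k B) = B.rep 1 * p 2 - B.rep 0 * p 3 := by
  simp [lY]

theorem eval_lX_eq_zero_iff {A B : P1 k} :
    eval ![A.rep 0, A.rep 1, 0, 0] (lX k B) = 0 ↔ B = A := by
  simpa [eval_lX] using rep_cross_eq_zero_iff

theorem eq_of_lX_dvd_lX {A B : P1 k} (h : lX k A ∣ lX k B) : B = A := by
  have := map_dvd (eval ![A.rep 0, A.rep 1, 0, 0]) h
  rwa [eval_lX_eq_zero_iff.2 rfl, zero_dvd_iff, eval_lX_eq_zero_iff] at this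

theorem lY_notMem_pointIdeal {B : P1 k} {P : P1 k × P1 k} (h : B ≠ P.2) :
    lY k B ∉ pointIdeal k P := by
  have hle : pointIdeal k P ≤
      RingHom.ker (eval ![P.1.rep 0, P.1.rep 1, P.2.rep 0, P.2.rep 1]) := by
    rw [pointIdeal, Ideal.span_le]
    rintro _ (rfl | rfl) <;>
      simp only [SetLike.mem_coe, RingHom.mem_ker, eval_lX, eval_lY, Matrix.cons_val] <;> ring
  intro hB
  have := hle hB
  simp only [RingHom.mem_ker, eval_lY] at this
  exact h (rep_cross_eq_zero_iff.1 this)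

theorem prod_lX_dvd {T : Finset (P1 k)} {f : R4} (h : ∀ A ∈ T, lX k A ∣ f) :
    ∏ A ∈ T, lX k A ∣ f :=
  Finset.prod_dvd_of_isRelPrime (fun A _ _ _ hAB =>
    (prime_lX A).irreducible.isRelPrime_iff_not_dvd.2 fun hd => hAB (eq_of_lX_dvd_lX hd).symm) h

def xMonomials (n : ℕ) : Set R4 :=
  Set.range fun i : Fin (n + 1) => X 0 ^ (i : ℕ) * X 1 ^ (n - i)

theorem X_zero_mem_Mx : (X 0 : R4) ∈ Mx k := Ideal.subset_span (by simp)

theorem X_one_mem_Mx : (X 1 : R4) ∈ Mx k := Ideal.subset_span (by simp)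

theorem lX_mem_Mx (A : P1 k) : lX k A ∈ Mx k :=
  sub_mem (Ideal.mul_mem_left _ _ X_zero_mem_Mx) (Ideal.mul_mem_left _ _ X_one_mem_Mx)

theorem prod_lX_mem_Mx_pow (s : Finset (P1 k)) : ∏ A ∈ s, lX k A ∈ Mx k ^ s.card := by
  simpa using Ideal.prod_mem_prod (I := fun _ => Mx k) fun A _ => lX_mem_Mx A

theorem X_zero_mul_mem_xMonomials {n : ℕ} {q : R4} (hq : q ∈ xMonomials n) :
    X 0 * q ∈ xMonomials (n + 1) := by
  obtain ⟨i, rfl⟩ := hq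
  refine ⟨i.succ, ?_⟩
  simp only [Fin.val_succ, Nat.add_sub_add_right, pow_succ]
  ring

theorem X_one_mul_mem_xMonomials {n : ℕ} {q : R4} (hq : q ∈ xMonomials n) :
    X 1 * q ∈ xMonomials (n + 1) := by
  obtain ⟨i, rfl⟩ := hq
  refine ⟨i.castSucc, ?_⟩
  simp only [Fin.val_castSucc, show n + 1 - i = n - i + 1 by omega, pow_succ]
  ring

theorem Mx_pow_le_span_xMonomials (n : ℕ) : Mx k ^ n ≤ Ideal.span (xMonomials n) := by
  induction n with
  | zero => simp [xMonomials, Ideal.one_eq_top]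
  | succ n ih =>
    rw [pow_succ]
    refine (Ideal.mul_mono_left ih).trans ?_
    rw [Mx, Ideal.span_mul_span']
    refine Ideal.span_mono ?_
    rintro _ ⟨p, hp, _, hq, rfl⟩
    rcases hq with rfl | rfl
    · simpa [mul_comm] using X_zero_mul_mem_xMonomials hp
    · simpa [mul_comm] using X_one_mul_mem_xMonomials hp

theorem Mx_pow_eq_span_monomial (c : ℕ) :
    Mx k ^ c = Ideal.span ((fun m => monomial m (1 : k)) '' {m | c ≤ m 0 + m 1}) := by
  apply le_antisymm
  · refine (Mx_pow_le_span_xMonomials c).trans (Ideal.span_le.2 ?_)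
    rintro _ ⟨i, rfl⟩
    refine Ideal.subset_span
      ⟨Finsupp.single (0 : Fin 4) (i : ℕ) + Finsupp.single (1 : Fin 4) (c - i), ?_, ?_⟩
    · simp only [Set.mem_ofPred_eq, Finsupp.coe_add, Pi.add_apply, Finsupp.single_eq_same,
        Finsupp.single_eq_of_ne zero_ne_one.symm, Finsupp.single_eq_of_ne one_ne_zero.symm]
      omega
    · simp [X_pow_eq_monomial, monomial_mul]
  · rw [Ideal.span_le]
    rintro _ ⟨m, hm, rfl⟩
    have hm' : monomial m (1 : k) = X 0 ^ m 0 * X 1 ^ m 1 * (X 2 ^ m 2 * X 3 ^ m 3) := by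
      rw [monomial_eq, Finsupp.prod_fintype _ _ (by simp), Fin.prod_univ_four]
      simp [mul_assoc]
    change monomial m (1 : k) ∈ _
    rw [hm']
    refine Ideal.mul_mem_right _ _ (Ideal.pow_le_pow_right hm ?_)
    rw [pow_add]
    exact Ideal.mul_mem_mul (Ideal.pow_mem_pow X_zero_mem_Mx _) (Ideal.pow_mem_pow X_one_mem_Mx _)

theorem mem_Mx_pow_iff {c : ℕ} {f : R4} :
    f ∈ Mx k ^ c ↔ ∀ m ∈ f.support, c ≤ m 0 + m 1 := by
  rw [Mx_pow_eq_span_monomial, mem_ideal_span_monomial_image]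
  exact forall₂_congr fun m _ => ⟨fun ⟨s, hs, hsm⟩ => (show c ≤ s 0 + s 1 from hs).trans
    (add_le_add (hsm 0) (hsm 1)), fun h => ⟨m, h, le_rfl⟩⟩

theorem mem_Mx_pow_of_X_zero_mul {c : ℕ} {g : R4} (h : X 0 * g ∈ Mx k ^ (c + 1)) :
    g ∈ Mx k ^ c := by
  rw [mem_Mx_pow_iff] at h ⊢
  intro m hm
  have := h (Finsupp.single 0 1 + m) (by rwa [mem_support_iff, coeff_X_mul, ← mem_support_iff])
  simp only [Finsupp.coe_add, Pi.add_apply, Finsupp.single_eq_same,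
    Finsupp.single_eq_of_ne one_ne_zero] at this
  omega

theorem mem_Mx_pow_of_X_three_mul {c : ℕ} {g : R4} (h : X 3 * g ∈ Mx k ^ c) :
    g ∈ Mx k ^ c := by
  rw [mem_Mx_pow_iff] at h ⊢
  intro m hm
  have := h (Finsupp.single 3 1 + m) (by rwa [mem_support_iff, coeff_X_mul, ← mem_support_iff])
  simpa using this

theorem map_mem_Mx_pow {F : Type*} [FunLike F R4 R4] [RingHomClass F R4 R4] {φ : F}
    (hφ : ∀ f ∈ Mx k, φ f ∈ Mx k) {c : ℕ} {f : R4} (hf : f ∈ Mx k ^ c) :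
    φ f ∈ Mx k ^ c := by
  have := Ideal.mem_map_of_mem φ hf
  rw [Ideal.map_pow] at this
  exact Ideal.pow_right_mono (Ideal.map_le_iff_le_comap.2 hφ) c this

theorem mem_Mx_pow_of_lX_mul {A : P1 k} {c : ℕ} {g : R4} (h : lX k A * g ∈ Mx k ^ (c + 1)) :
    g ∈ Mx k ^ c := by
  have hsymm := map_mem_Mx_pow (φ := (xChange A).symm)
    (fun f hf => linearChange_mem_span_X_pair _ hf) h
  have hX : (xChange A).symm (lX k A) = X 0 := (AlgEquiv.symm_apply_eq _).2 (xChange_X_zero A).symm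
  rw [map_mul, hX] at hsymm
  simpa using map_mem_Mx_pow (φ := xChange A) (fun f hf => linearChange_mem_span_X_pair _ hf)
    (mem_Mx_pow_of_X_zero_mul hsymm)

theorem mem_Mx_pow_of_prod_lX_mul (T : Finset (P1 k)) {c : ℕ} {g : R4}
    (h : (∏ A ∈ T, lX k A) * g ∈ Mx k ^ (c + T.card)) : g ∈ Mx k ^ c := by
  induction T using Finset.induction_on generalizing c with
  | empty => simpa using h
  | insert A T hA ih =>
    rw [Finset.prod_insert hA, Finset.card_insert_of_notMem hA, ← add_assoc, mul_assoc] at h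
    exact ih (mem_Mx_pow_of_lX_mul h)

theorem lX_mul_mem_span_xMonomials (A : P1 k) {n : ℕ} {p : R4}
    (hp : p ∈ Submodule.span k (xMonomials n)) :
    lX k A * p ∈ Submodule.span k (xMonomials (n + 1)) := by
  induction hp using Submodule.span_induction with
  | mem q hq =>
    rw [lX, sub_mul, mul_assoc, mul_assoc, ← smul_eq_C_mul, ← smul_eq_C_mul]
    exact sub_mem (Submodule.smul_mem _ _ (Submodule.subset_span (X_zero_mul_mem_xMonomials hq)))
      (Submodule.smul_mem _ _ (Submodule.subset_span (X_one_mul_mem_xMonomials hq)))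
  | zero => simp
  | add _ _ _ _ hx hy => rw [mul_add]; exact add_mem hx hy
  | smul r _ _ hx => rw [mul_smul_comm]; exact Submodule.smul_mem _ _ hx

theorem prod_lX_mem_span_xMonomials (s : Finset (P1 k)) :
    ∏ A ∈ s, lX k A ∈ Submodule.span k (xMonomials s.card) := by
  induction s using Finset.induction_on with
  | empty => exact Submodule.subset_span ⟨0, by simp⟩
  | insert A s hA ih =>
    rw [Finset.prod_insert hA, Finset.card_insert_of_notMem hA]
    exact lX_mul_mem_span_xMonomials A ih

theorem linearIndependent_xMonomials (n : ℕ) :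
    LinearIndependent k fun i : Fin (n + 1) => (X 0 ^ (i : ℕ) * X 1 ^ (n - i) : R4) := by
  have hinj : Function.Injective fun i : Fin (n + 1) =>
      Finsupp.single (0 : Fin 4) (i : ℕ) + Finsupp.single 1 (n - i) :=
    fun i i' h => Fin.ext (by simpa using congrArg (· 0) h)
  have hfun : (fun i : Fin (n + 1) => (X 0 ^ (i : ℕ) * X 1 ^ (n - i) : R4)) =
      basisMonomials (Fin 4) k ∘
        fun i : Fin (n + 1) => Finsupp.single 0 (i : ℕ) + Finsupp.single 1 (n - i) :=
    funext fun i => by simp [X_pow_eq_monomial, monomial_mul]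
  rw [hfun]
  exact (basisMonomials (Fin 4) k).linearIndependent.comp _ hinj

theorem linearIndependent_prod_lX_erase (U : Finset (P1 k)) :
    LinearIndependent k fun A : U => ∏ B ∈ U.erase A, lX k B := by
  rw [Fintype.linearIndependent_iff]
  intro g hg A
  have hA := congrArg (eval ![A.1.rep 0, A.1.rep 1, 0, 0]) hg
  rw [map_sum, Finset.sum_eq_single A, map_zero, smul_eq_C_mul, map_mul, eval_C, map_prod] at hA
  · refine (mul_eq_zero.1 hA).resolve_right (Finset.prod_ne_zero_iff.2 fun B hB => ?_)
    exact fun h => Finset.ne_of_mem_erase hB (eval_lX_eq_zero_iff.1 h)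
  · intro B _ hBA
    rw [smul_eq_C_mul, map_mul, map_prod,
      Finset.prod_eq_zero (i := A.1) _ (eval_lX_eq_zero_iff.2 rfl), mul_zero]
    exact Finset.mem_erase.2 ⟨fun h => hBA (Subtype.ext h).symm, A.2⟩
  · simp

theorem span_prod_lX_erase_eq (U : Finset (P1 k)) {n : ℕ} (hU : U.card = n + 1) :
    Submodule.span k (Set.range fun A : U => ∏ B ∈ U.erase A, lX k B) =
      Submodule.span k (xMonomials n) := by
  have : FiniteDimensional k (Submodule.span k (xMonomials (k := k) n)) :=
    FiniteDimensional.span_of_finite k (Set.finite_range _)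
  refine Submodule.eq_of_le_of_finrank_eq (Submodule.span_le.2 ?_) ?_
  · rintro _ ⟨A, rfl⟩
    simpa [Finset.card_erase_of_mem A.2, hU] using prod_lX_mem_span_xMonomials (U.erase A)
  · rw [finrank_span_eq_card (linearIndependent_prod_lX_erase U), xMonomials,
      finrank_span_eq_card (linearIndependent_xMonomials n), Fintype.card_coe, hU, Fintype.card_fin]

theorem Mx_pow_le_span_prod_lX_erase (U : Finset (P1 k)) {n : ℕ} (hU : U.card = n + 1) :
    Mx k ^ n ≤ Ideal.span (Set.range fun A : U => ∏ B ∈ U.erase A, lX k B) := by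
  refine (Mx_pow_le_span_xMonomials n).trans (Ideal.span_le.2 fun x hx => ?_)
  refine Submodule.span_le_restrictScalars k R4 _ ?_
  rw [span_prod_lX_erase_eq U hU]
  exact Submodule.subset_span hx

theorem mem_IX_iff {Xs : Finset (P1 k × P1 k)} {f : R4} :
    f ∈ IX k Xs ↔ ∀ P ∈ Xs, f ∈ pointIdeal k P := by
  simp [IX]

theorem mem_pointIdeal_of_lX_dvd {P : P1 k × P1 k} {f : R4} (h : lX k P.1 ∣ f) :
    f ∈ pointIdeal k P :=
  Ideal.mem_of_dvd _ h (Ideal.subset_span (by simp))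

theorem mem_pointIdeal_of_lY_dvd {P : P1 k × P1 k} {f : R4} (h : lY k P.2 ∣ f) :
    f ∈ pointIdeal k P :=
  Ideal.mem_of_dvd _ h (Ideal.subset_span (by simp))

theorem killVar_lX {n : Fin 4} (h0 : n ≠ 0) (h1 : n ≠ 1) (A : P1 k) :
    killVar n (lX k A) = lX k A := by
  simp [lX, killVar_X_of_ne h0.symm, killVar_X_of_ne h1.symm]

theorem killVar_mem_Mx_pow {n : Fin 4} (h0 : n ≠ 0) (h1 : n ≠ 1) {c : ℕ} {f : R4}
    (hf : f ∈ Mx k ^ c) : killVar n f ∈ Mx k ^ c := by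
  refine map_mem_Mx_pow (fun g hg => Ideal.mem_comap.1 (Ideal.map_le_iff_le_comap.1 ?_ hg)) hf
  rw [Mx, Ideal.map_span, Ideal.span_le]
  rintro _ ⟨l, hl | hl, rfl⟩ <;> subst hl <;>
    exact Ideal.subset_span (by simp [killVar_X_of_ne h0.symm, killVar_X_of_ne h1.symm])

theorem mk_prod_lY (s : Finset (P1 k × P1 k)) :
    Ideal.Quotient.mk (Ideal.span {X 2}) (∏ P ∈ s, lY k P.2) =
      Ideal.Quotient.mk _ (C (∏ P ∈ s, -P.2.rep 0) * X 3 ^ s.card) := by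
  have h : ∀ B : P1 k, Ideal.Quotient.mk (Ideal.span {X 2}) (lY k B) =
      Ideal.Quotient.mk _ (C (-B.rep 0) * X 3) := fun B => by
    rw [Ideal.Quotient.eq, lY, C_neg]
    exact Ideal.mem_span_singleton.2 ⟨C (B.rep 1), by ring⟩
  rw [map_prod, Finset.prod_congr rfl fun P _ => h P.2, ← map_prod, Finset.prod_mul_distrib,
    Finset.prod_const, ← map_prod]

theorem X_three_pow_mul_mem_of_mem_pointIdeal_of_fst_ne {Xs : Finset (P1 k × P1 k)}
    (h01 : ∀ P ∈ Xs, P.2 ≠ pt01 k) {A : P1 k} {a d : ℕ} (hd : alphaA k Xs A ≤ d) {h : R4}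
    (hI : ∀ P ∈ Xs, P.1 ≠ A → h ∈ pointIdeal k P) (hM : h ∈ Mx k ^ a) :
    X 3 ^ d * h ∈ (IX k Xs ⊓ Mx k ^ a) ⊔ Ideal.span {X 2} := by
  set F := Xs.filter fun P => P.1 = A
  set c := ∏ P ∈ F, -P.2.rep 0
  have hc : c ≠ 0 := Finset.prod_ne_zero_iff.2 fun P hP =>
    neg_ne_zero.2 (rep_zero_ne_zero_of_ne_pt01 (h01 P (Finset.mem_filter.1 hP).1))
  set G := C c⁻¹ * X 3 ^ (d - F.card) * (∏ P ∈ F, lY k P.2) * h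
  have hG : G ∈ IX k Xs ⊓ Mx k ^ a := by
    refine ⟨mem_IX_iff.2 fun P hP => ?_, Ideal.mul_mem_left _ _ hM⟩
    by_cases hPA : P.1 = A
    · exact Ideal.mul_mem_right _ _ (mem_pointIdeal_of_lY_dvd
        ((Finset.dvd_prod_of_mem _ (Finset.mem_filter.2 ⟨hP, hPA⟩)).mul_left _))
    · exact Ideal.mul_mem_left _ _ (hI P hP hPA)
  have hCc : C c⁻¹ * C c = (1 : R4) := by rw [← C_mul, inv_mul_cancel₀ hc, C_1]
  have hXG : X 3 ^ d * h - G ∈ Ideal.span {X 2} := by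
    rw [← Ideal.Quotient.eq]
    calc Ideal.Quotient.mk (Ideal.span {(X 2 : R4)}) (X 3 ^ d * h)
        = Ideal.Quotient.mk _ (C c⁻¹ * X 3 ^ (d - F.card) * (C c * X 3 ^ F.card) * h) := by
          congr 1
          rw [← pow_sub_mul_pow _ (show F.card ≤ d from hd)]
          linear_combination (X 3 ^ (d - F.card) * X 3 ^ F.card * h) * hCc.symm
      _ = Ideal.Quotient.mk _ G := by simp only [G, map_mul, mk_prod_lY]; rfl
  simpa using add_mem (Ideal.mem_sup_left hG) (Ideal.mem_sup_right hXG)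

theorem X_three_pow_mul_mem_of_lX_dvd {Xs : Finset (P1 k × P1 k)}
    (h01 : ∀ P ∈ Xs, P.2 ≠ pt01 k) {a : ℕ} (ha : (pi1 k Xs).card ≤ a + 1) {d : ℕ}
    {f : R4} (hM : f ∈ Mx k ^ a) (hL : ∀ A ∈ pi1 k Xs, d < alphaA k Xs A → lX k A ∣ f) :
    X 3 ^ d * f ∈ (IX k Xs ⊓ Mx k ^ a) ⊔ Ideal.span {X 2} := by
  set T := (pi1 k Xs).filter fun A => d < alphaA k Xs A
  set U := (pi1 k Xs).filter fun A => ¬d < alphaA k Xs A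
  have hTU : T.card + U.card = (pi1 k Xs).card := Finset.card_filter_add_card_filter_not _
  have hfst : ∀ P ∈ Xs, P.1 ∈ T ∨ P.1 ∈ U := fun P hP => by
    have : P.1 ∈ pi1 k Xs := Finset.mem_image_of_mem _ hP
    by_cases h : d < alphaA k Xs P.1
    · exact .inl (Finset.mem_filter.2 ⟨this, h⟩)
    · exact .inr (Finset.mem_filter.2 ⟨this, h⟩)
  obtain ⟨g, rfl⟩ := prod_lX_dvd fun A hA =>
    hL A (Finset.mem_filter.1 hA).1 (Finset.mem_filter.1 hA).2
  rcases U.eq_empty_or_nonempty with hU | hU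
  · refine Ideal.mem_sup_left ⟨mem_IX_iff.2 fun P hP => ?_, Ideal.mul_mem_left _ _ hM⟩
    have hPT : P.1 ∈ T := (hfst P hP).resolve_right (by simp [hU])
    exact Ideal.mul_mem_left _ _ (Ideal.mul_mem_right _ _
      (mem_pointIdeal_of_lX_dvd (Finset.dvd_prod_of_mem _ hPT)))
  obtain ⟨n, hn⟩ : ∃ n, U.card = n + 1 := Nat.exists_eq_add_one.2 hU.card_pos
  have hg : g ∈ Mx k ^ (a - T.card - n) *
      Ideal.span (Set.range fun A : U => ∏ B ∈ U.erase A, lX k B) := by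
    have := mem_Mx_pow_of_prod_lX_mul T (c := a - T.card) (by rwa [Nat.sub_add_cancel (by omega)])
    rw [show a - T.card = a - T.card - n + n by omega, pow_add] at this
    exact Ideal.mul_mono_right (Mx_pow_le_span_prod_lX_erase U hn) this
  refine Submodule.mul_induction_on hg (fun r hr s hs => ?_)
    (fun x y hx hy => by rw [mul_add, mul_add]; exact add_mem hx hy)
  obtain ⟨c, rfl⟩ := Ideal.mem_span_range_iff_exists_fun.1 hs
  simp only [Finset.mul_sum]
  refine sum_mem fun B _ => X_three_pow_mul_mem_of_mem_pointIdeal_of_fst_ne h01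
    (not_lt.1 (Finset.mem_filter.1 B.2).2) (fun P hP hPB => ?_) ?_
  · rcases hfst P hP with hPT | hPU
    · exact mem_pointIdeal_of_lX_dvd ((Finset.dvd_prod_of_mem _ hPT).mul_right _)
    · exact mem_pointIdeal_of_lX_dvd (((Finset.dvd_prod_of_mem _
        (Finset.mem_erase.2 ⟨hPB, hPU⟩)).mul_left _).mul_left _ |>.mul_left _)
  · have hB := prod_lX_mem_Mx_pow (U.erase B)
    rw [Finset.card_erase_of_mem B.2, hn, Nat.add_sub_cancel] at hB
    have := Ideal.mul_mem_mul (prod_lX_mem_Mx_pow T)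
      (Ideal.mul_mem_mul hr (Ideal.mul_mem_left _ (c B) hB))
    rwa [← pow_add, ← pow_add, show T.card + (a - T.card - n + n) = a by omega] at this

theorem killVar_two_mem_Mx_pow {a : ℕ} {f : R4} (hf : f ∈ Mx k ^ a ⊔ Ideal.span {X 2}) :
    killVar 2 f ∈ Mx k ^ a := by
  obtain ⟨y, hy, z, hz, rfl⟩ := Submodule.mem_sup.1 hf
  obtain ⟨w, rfl⟩ := Ideal.mem_span_singleton'.1 hz
  simpa using killVar_mem_Mx_pow (by decide) (by decide) hy

theorem killVar_two_mem_span {A : P1 k} {β : ℕ} {f : R4}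
    (hf : f ∈ Ideal.span {X 2, X 3 ^ β, lX k A}) :
    killVar 2 f ∈ Ideal.span {X 3 ^ β, lX k A} := by
  have := Ideal.mem_map_of_mem (killVar 2) hf
  rwa [Ideal.map_span, Set.image_insert_eq, Set.image_pair, killVar_X_self, map_pow,
    killVar_X_of_ne (by decide), killVar_lX (by decide) (by decide), Ideal.span_insert_zero] at this

theorem killVar_three_mem_span {A : P1 k} {β : ℕ} {f : R4}
    (hf : f ∈ Ideal.span {X 3 ^ (β + 1), lX k A}) : killVar 3 f ∈ Ideal.span {lX k A} := by
  have := Ideal.mem_map_of_mem (killVar 3) hf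
  rwa [Ideal.map_span, Set.image_pair, map_pow, killVar_X_self, zero_pow (by omega),
    killVar_lX (by decide) (by decide), Ideal.span_insert_zero] at this

theorem mem_span_of_X_three_mul {A : P1 k} {β : ℕ} {g : R4}
    (h : X 3 * g ∈ Ideal.span {X 3 ^ (β + 1), lX k A}) :
    g ∈ Ideal.span {X 3 ^ β, lX k A} := by
  obtain ⟨p, q, hpq⟩ := Ideal.mem_span_pair.1 h
  have hq : killVar 3 q = 0 := by
    have := congrArg (killVar 3) hpq
    simp only [map_add, map_mul, map_pow, killVar_X_self, zero_pow (Nat.succ_ne_zero β), mul_zero,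
      zero_mul, zero_add, killVar_lX (by decide : (3 : Fin 4) ≠ 0) (by decide)] at this
    exact (mul_eq_zero.1 this).resolve_right (prime_lX A).ne_zero
  obtain ⟨q', hq'⟩ := Ideal.mem_span_singleton'.1 (by simpa [hq] using sub_killVar_mem_span 3 q)
  refine Ideal.mem_span_pair.2 ⟨p, q', mul_left_cancel₀ (X_ne_zero (3 : Fin 4)) ?_⟩
  rw [← hpq, ← hq']
  ring

theorem X_three_pow_mul_mem_of_mem_span {Xs : Finset (P1 k × P1 k)}
    (h01 : ∀ P ∈ Xs, P.2 ≠ pt01 k) {a : ℕ} (ha : (pi1 k Xs).card ≤ a + 1) (N : ℕ) :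
    ∀ (d : ℕ) (f : R4), (∀ A ∈ pi1 k Xs, alphaA k Xs A ≤ d + N) → f ∈ Mx k ^ a →
      (∀ A ∈ pi1 k Xs, f ∈ Ideal.span {X 3 ^ (alphaA k Xs A - d), lX k A}) →
      X 3 ^ d * f ∈ (IX k Xs ⊓ Mx k ^ a) ⊔ Ideal.span {X 2} := by
  induction N with
  | zero => exact fun d f hN hM _ =>
      X_three_pow_mul_mem_of_lX_dvd h01 ha hM fun A hA hd => absurd (hN A hA) (by omega)
  | succ N ih =>
    intro d f hN hM hf
    obtain ⟨g, hg⟩ := Ideal.mem_span_singleton'.1 (sub_killVar_mem_span 3 f)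
    have hκ : ∀ A ∈ pi1 k Xs, d < alphaA k Xs A → killVar 3 f ∈ Ideal.span {lX k A} :=
      fun A hA hd => killVar_three_mem_span (β := alphaA k Xs A - d - 1)
        (by rw [show alphaA k Xs A - d - 1 + 1 = alphaA k Xs A - d by omega]; exact hf A hA)
    have hgM : g ∈ Mx k ^ a := mem_Mx_pow_of_X_three_mul
      (by rw [mul_comm, hg]; exact sub_mem hM (killVar_mem_Mx_pow (by decide) (by decide) hM))
    have hgspan :
        ∀ A ∈ pi1 k Xs, g ∈ Ideal.span {X 3 ^ (alphaA k Xs A - (d + 1)), lX k A} := by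
      intro A hA
      by_cases hd : d < alphaA k Xs A
      · refine mem_span_of_X_three_mul ?_
        rw [show alphaA k Xs A - (d + 1) + 1 = alphaA k Xs A - d by omega, mul_comm, hg]
        exact sub_mem (hf A hA) (Ideal.span_mono (by simp) (hκ A hA hd))
      · rw [show alphaA k Xs A - (d + 1) = 0 by omega, pow_zero]
        exact Ideal.mem_of_dvd _ (one_dvd g) (Ideal.subset_span (by simp))
    have := add_mem
      (X_three_pow_mul_mem_of_lX_dvd h01 ha (killVar_mem_Mx_pow (by decide) (by decide) hM)
        fun A hA hd => Ideal.mem_span_singleton.1 (hκ A hA hd))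
      (ih (d + 1) g (fun A hA => by have := hN A hA; omega) hgM hgspan)
    convert this using 1
    linear_combination (X 3 ^ d : R4) * hg.symm

theorem mul_lY_mem_span (B : P1 k) {n : ℕ} {L q : R4} (hq : q ∈ Ideal.span {X 2, X 3 ^ n, L}) :
    q * lY k B ∈ Ideal.span {X 2, X 3 ^ (n + 1), L} := by
  have h2 : (X 2 : R4) ∈ Ideal.span {X 2, X 3 ^ (n + 1), L} := Ideal.subset_span (by simp)
  have h3 : (X 3 ^ (n + 1) : R4) ∈ Ideal.span {X 2, X 3 ^ (n + 1), L} :=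
    Ideal.subset_span (by simp)
  have hL : L ∈ Ideal.span {X 2, X 3 ^ (n + 1), L} := Ideal.subset_span (by simp)
  induction hq using Submodule.span_induction with
  | mem x hx =>
    rcases hx with rfl | rfl | rfl
    · exact Ideal.mul_mem_right _ _ h2
    · have : X 3 ^ n * lY k B = X 3 ^ n * C (B.rep 1) * X 2 - C (B.rep 0) * X 3 ^ (n + 1) := by
        rw [lY]; ring
      rw [this]
      exact sub_mem (Ideal.mul_mem_left _ _ h2) (Ideal.mul_mem_left _ _ h3)
    · exact Ideal.mul_mem_right _ _ hL
  | zero => simp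
  | add _ _ _ _ hx hy => rw [add_mul]; exact add_mem hx hy
  | smul r _ _ hx => rw [smul_eq_mul, mul_assoc]; exact Ideal.mul_mem_left _ _ hx

theorem iInf_pointIdeal_le_span (A : P1 k) (F : Finset (P1 k × P1 k)) (hF : ∀ P ∈ F, P.1 = A) :
    ⨅ P ∈ F, pointIdeal k P ≤ Ideal.span {X 2, X 3 ^ F.card, lX k A} := by
  induction F using Finset.induction_on with
  | empty =>
    rw [Finset.card_empty, pow_zero,
      Ideal.eq_top_of_isUnit_mem _ (Ideal.subset_span (by simp)) isUnit_one]
    exact le_top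
  | insert P F hP ih =>
    intro f hf
    rw [Finset.iInf_insert] at hf
    obtain ⟨hfP, hfF⟩ := Submodule.mem_inf.1 hf
    have hPA := hF P (Finset.mem_insert_self _ _)
    obtain ⟨p, q, rfl⟩ := Ideal.mem_span_pair.1 (show _ ∈ Ideal.span {lX k A, lY k P.2} by
      rw [← hPA]; exact hfP)
    have hq : q ∈ ⨅ Q ∈ F, pointIdeal k Q := by
      simp only [Submodule.mem_iInf] at hfF ⊢
      intro Q hQ
      have hQA := hF Q (Finset.mem_insert_of_mem hQ)
      have hmul : lY k P.2 * q ∈ pointIdeal k Q := by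
        have hlX : p * lX k A ∈ pointIdeal k Q :=
          Ideal.mul_mem_left _ _ (mem_pointIdeal_of_lX_dvd (by rw [hQA]))
        simpa [mul_comm] using sub_mem (hfF Q hQ) hlX
      refine ((isPrime_pointIdeal Q).mem_or_mem hmul).resolve_left
        (lY_notMem_pointIdeal fun h => hP ?_)
      rwa [Prod.ext (hPA.trans hQA.symm) h]
    rw [Finset.card_insert_of_notMem hP]
    exact add_mem (Ideal.mul_mem_left _ _ (Ideal.subset_span (by simp)))
      (mul_lY_mem_span _ (ih (fun Q hQ => hF Q (Finset.mem_insert_of_mem hQ)) hq))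

theorem IX_le_span (Xs : Finset (P1 k × P1 k)) (A : P1 k) :
    IX k Xs ≤ Ideal.span {X 2, X 3 ^ alphaA k Xs A, lX k A} := by
  intro f hf
  refine iInf_pointIdeal_le_span A _ (fun P hP => (Finset.mem_filter.1 hP).2) ?_
  simp only [Submodule.mem_iInf]
  exact fun P hP => mem_IX_iff.1 hf P (Finset.mem_filter.1 hP).1

end

theorem stmt12 (Xs : Finset (P1 k × P1 k))
    (h01 : ∀ P ∈ Xs, P.2 ≠ pt01 k) (a : ℕ) (ha : (pi1 k Xs).card ≤ a + 1) :
    (IX k Xs ⊓ (Mx k) ^ a) ⊔ Ideal.span {X 2} =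
      (⨅ A ∈ pi1 k Xs, Ideal.span {X 2, X 3 ^ (alphaA k Xs A), lX k A}) ⊓
        ((Mx k) ^ a ⊔ Ideal.span {X 2}) := by
  apply le_antisymm
  · exact sup_le (le_inf (le_iInf₂ fun A _ => inf_le_left.trans (IX_le_span Xs A))
      (inf_le_right.trans le_sup_left))
      (le_inf (le_iInf₂ fun A _ => Ideal.span_mono (by simp)) le_sup_right)
  · intro f hf
    obtain ⟨hf1, hf2⟩ := Submodule.mem_inf.1 hf
    simp only [Submodule.mem_iInf] at hf1
    have := X_three_pow_mul_mem_of_mem_span h01 ha Xs.card 0 (killVar 2 f)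
      (fun A _ => (Finset.card_filter_le _ _).trans (by omega)) (killVar_two_mem_Mx_pow hf2)
      (fun A hA => by simpa using killVar_two_mem_span (hf1 A hA))
    simpa using add_mem (Ideal.mem_sup_right (sub_killVar_mem_span 2 f)) this

end
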